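/- arXiv:1601.00943 — 4 statements merged into one kernel-verified Lean document; each statement's English description precedes it below -/
import Mathlib

section
/- For every n ≥ 1, if F₁,…,Fₙ are matchings in a bipartite graph, each of size at least 2n−1, then there exists a full rainbow matching, i.e., a choice of edges e₁ ∈ F₁, …, eₙ ∈ Fₙ that are pairwise disjoint. -/
/-- Two edges of a bipartite graph (encoded as pairs side-U × side-W) are vertex-disjoint. -/
def EdgeDisj {α β : Type*} (e f : α × β) : Prop := e.1 ≠ f.1 ∧ e.2 ≠ f.2

/-- A finite set of bipartite edges is a matching: distinct edges are vertex-disjoint. -/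
def IsMatching {α β : Type*} (M : Finset (α × β)) : Prop :=
  ∀ e ∈ M, ∀ f ∈ M, e ≠ f → EdgeDisj e f

/-- A full rainbow matching: one edge from each `F i`, pairwise vertex-disjoint. -/
def HasFullRainbow {α β : Type*} {n : ℕ} (F : Fin n → Finset (α × β)) : Prop :=
  ∃ g : Fin n → α × β, (∀ i, g i ∈ F i) ∧ ∀ i j, i ≠ j → EdgeDisj (g i) (g j)

lemma rainbow_aux {α β : Type*} :
    ∀ n : ℕ, ∀ F : Fin n → Finset (α × β), (∀ i, IsMatching (F i)) →
      (∀ i, 2 * n - 1 ≤ (F i).card) → HasFullRainbow F := by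
  intro n
  induction n with
  | zero =>
    intro F _ _
    exact ⟨Fin.elim0, fun i => i.elim0, fun i => i.elim0⟩
  | succ n ih =>
    intro F hmatch hcard
    classical
    obtain ⟨g, hg1, hg2⟩ := ih (fun i => F i.castSucc)
      (fun i => hmatch i.castSucc)
      (fun i => le_trans (by omega) (hcard i.castSucc))
    set M := F (Fin.last n) with hM
    set Bad : Finset (α × β) :=
      M.filter (fun f => ∃ j : Fin n, (g j).1 = f.1 ∨ (g j).2 = f.2) with hBad
    have hcard1 : ∀ (j : Fin n),
        (M.filter (fun f => (g j).1 = f.1 ∨ (g j).2 = f.2)).card ≤ 2 := by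
      intro j
      have hsub : M.filter (fun f => (g j).1 = f.1 ∨ (g j).2 = f.2) ⊆
          M.filter (fun f => (g j).1 = f.1) ∪ M.filter (fun f => (g j).2 = f.2) := by
        intro f hf
        simp only [Finset.mem_filter, Finset.mem_union] at hf ⊢
        tauto
      have h1 : (M.filter (fun f => (g j).1 = f.1)).card ≤ 1 := by
        apply Finset.card_le_one.mpr
        intro a ha b hb
        simp only [Finset.mem_filter] at ha hb
        by_contra hne
        exact (hmatch (Fin.last n) a ha.1 b hb.1 hne).1 (ha.2 ▸ hb.2 ▸ rfl)
      have h2 : (M.filter (fun f => (g j).2 = f.2)).card ≤ 1 := by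
        apply Finset.card_le_one.mpr
        intro a ha b hb
        simp only [Finset.mem_filter] at ha hb
        by_contra hne
        exact (hmatch (Fin.last n) a ha.1 b hb.1 hne).2 (ha.2 ▸ hb.2 ▸ rfl)
      calc _ ≤ (M.filter (fun f => (g j).1 = f.1) ∪
            M.filter (fun f => (g j).2 = f.2)).card := Finset.card_le_card hsub
        _ ≤ _ + _ := Finset.card_union_le _ _
        _ ≤ 2 := by omega
    have hBadcard : Bad.card ≤ 2 * n := by
      have hsub : Bad ⊆ Finset.univ.biUnion
          (fun j : Fin n => M.filter (fun f => (g j).1 = f.1 ∨ (g j).2 = f.2)) := by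
        intro f hf
        rw [hBad, Finset.mem_filter] at hf
        obtain ⟨hfM, j, hj⟩ := hf
        exact Finset.mem_biUnion.mpr ⟨j, Finset.mem_univ j, Finset.mem_filter.mpr ⟨hfM, hj⟩⟩
      calc Bad.card ≤ _ := Finset.card_le_card hsub
        _ ≤ ∑ j : Fin n, (M.filter (fun f => (g j).1 = f.1 ∨ (g j).2 = f.2)).card :=
            Finset.card_biUnion_le
        _ ≤ ∑ _j : Fin n, 2 := Finset.sum_le_sum (fun j _ => hcard1 j)
        _ = 2 * n := by simp [Finset.sum_const, mul_comm]
    have hMcard : 2 * n + 1 ≤ M.card := by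
      have := hcard (Fin.last n); rw [← hM] at this; omega
    have hne : (M \ Bad).Nonempty := by
      have hsub' : Bad ⊆ M := hBad ▸ Finset.filter_subset _ _
      have hc := Finset.card_sdiff_of_subset hsub'
      rw [← Finset.card_pos]
      omega
    obtain ⟨e, he⟩ := hne
    rw [Finset.mem_sdiff] at he
    obtain ⟨heM, heBad⟩ := he
    have hefree : ∀ j : Fin n, (g j).1 ≠ e.1 ∧ (g j).2 ≠ e.2 := by
      intro j
      simp only [hBad, Finset.mem_filter, not_and, not_exists, not_or] at heBad
      exact heBad heM j
    set g' : Fin (n + 1) → α × β := Fin.snoc g e with hg'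
    refine ⟨g', ?_, ?_⟩
    · intro i
      refine Fin.lastCases ?_ ?_ i
      · simpa [hg'] using heM
      · intro j; simpa [hg'] using hg1 j
    · intro i j hij
      refine Fin.lastCases (motive := fun i => i ≠ j → EdgeDisj (g' i) (g' j))
        ?_ ?_ i hij
      · refine Fin.lastCases (motive := fun j => Fin.last n ≠ j →
          EdgeDisj (g' (Fin.last n)) (g' j)) ?_ ?_ j
        · intro h; exact absurd rfl h
        · intro k _
          simp only [hg', Fin.snoc_last, Fin.snoc_castSucc]
          exact ⟨(hefree k).1.symm, (hefree k).2.symm⟩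
      · intro k
        refine Fin.lastCases (motive := fun j => k.castSucc ≠ j →
          EdgeDisj (g' k.castSucc) (g' j)) ?_ ?_ j
        · intro _
          simp only [hg', Fin.snoc_last, Fin.snoc_castSucc]
          exact hefree k
        · intro m hkm
          simp only [hg', Fin.snoc_castSucc]
          exact hg2 k m (fun h => hkm (by rw [h]))

theorem stmt0 {α β : Type*} (n : ℕ) (hn : 1 ≤ n) (F : Fin n → Finset (α × β))
    (hmatch : ∀ i, IsMatching (F i)) (hcard : ∀ i, 2 * n - 1 ≤ (F i).card) :
    HasFullRainbow F := rainbow_aux n F hmatch hcard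
end

section
/- For every n > 1 there exist a bipartite graph G and matchings F₁,…,Fₙ in G, each of size exactly n, that admit no full rainbow matching. -/
theorem stmt1 (n : ℕ) (hn : 1 < n) :
    ∃ (α β : Type) (F : Fin n → Finset (α × β)),
      (∀ i, IsMatching (F i)) ∧ (∀ i, (F i).card = n) ∧ ¬ HasFullRainbow F := by
  have hn0 : n ≠ 0 := by omega
  haveI : NeZero n := ⟨hn0⟩
  -- shift value: 0 for the first matching, 1 for the others
  set c : Fin n → ZMod n := fun i => if i = 0 then 0 else 1 with hc
  refine ⟨ZMod n, ZMod n,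
    fun i => Finset.univ.image (fun x => (x, x + c i)), ?_, ?_, ?_⟩
  · intro i e he f hf hef
    simp only [Finset.mem_image, Finset.mem_univ, true_and] at he hf
    obtain ⟨x, rfl⟩ := he
    obtain ⟨y, rfl⟩ := hf
    have hxy : x ≠ y := by rintro rfl; exact hef rfl
    exact ⟨hxy, fun h => hxy (by simpa using h)⟩
  · intro i
    rw [Finset.card_image_of_injective _ (fun x y h => by simpa using (Prod.mk.injEq ..▸ h).1)]
    simp
  · rintro ⟨g, hg, hdisj⟩
    have hmem : ∀ i, g i = ((g i).1, (g i).1 + c i) := by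
      intro i
      have := hg i
      simp only [Finset.mem_image, Finset.mem_univ, true_and] at this
      obtain ⟨x, hx⟩ := this
      rw [← hx]
    have h2 : ∀ i, (g i).2 = (g i).1 + c i := by
      intro i; conv_lhs => rw [hmem i]
    have hcard : Fintype.card (Fin n) = Fintype.card (ZMod n) := by
      simp [ZMod.card]
    have hb1 : Function.Bijective (fun i => (g i).1) :=
      (Fintype.bijective_iff_injective_and_card _).2
        ⟨fun i j h => by
          by_contra hij
          exact (hdisj i j hij).1 h, hcard⟩
    have hb2 : Function.Bijective (fun i => (g i).2) :=
      (Fintype.bijective_iff_injective_and_card _).2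
        ⟨fun i j h => by
          by_contra hij
          exact (hdisj i j hij).2 h, hcard⟩
    have hs1 : ∑ i, (g i).1 = ∑ z : ZMod n, z :=
      Fintype.sum_bijective _ hb1 _ _ (fun _ => rfl)
    have hs2 : ∑ i, (g i).2 = ∑ z : ZMod n, z :=
      Fintype.sum_bijective _ hb2 _ _ (fun _ => rfl)
    have hsum : ∑ i, (g i).2 = (∑ i, (g i).1) + ∑ i, c i := by
      rw [← Finset.sum_add_distrib]
      exact Finset.sum_congr rfl fun i _ => h2 i
    have hcsum : ∑ i, c i = -1 := by
      have : ∑ i, c i = ∑ i ∈ Finset.univ.filter (fun i : Fin n => ¬ i = 0), 1 := by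
        rw [Finset.sum_filter]
        refine Finset.sum_congr rfl fun i _ => ?_
        simp only [hc]
        by_cases h : i = 0 <;> simp [h]
      rw [this, Finset.sum_const, nsmul_eq_mul, mul_one]
      have hcard' : (Finset.univ.filter (fun i : Fin n => ¬ i = 0)).card = n - 1 := by
        rw [Finset.filter_not, Finset.card_sdiff_of_subset (Finset.filter_subset _ _)]
        simp [Finset.filter_eq']
      rw [hcard']
      have : ((n - 1 : ℕ) : ZMod n) = (n : ZMod n) - 1 := by
        push_cast [Nat.cast_sub (by omega : 1 ≤ n)]
        ring
      rw [this, ZMod.natCast_self, zero_sub]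
    have : (0 : ZMod n) = -1 := by
      have := hsum
      rw [hs1, hs2, hcsum] at this
      linear_combination this
    have h1 : (1 : ZMod n) = 0 := by linear_combination this
    haveI : Fact (1 < n) := ⟨hn⟩
    exact one_ne_zero h1
end

section
/- Let n > 1. In the even cycle C_{2n}, let M₁ be the perfect matching consisting of the 'odd' edges and M₂ the perfect matching consisting of the 'even' edges. Then for any 1 ≤ k ≤ n−1, the family consisting of k copies of M₁ and n−k copies of M₂ has no full rainbow matching. -/
/-- Two edges (as unordered pairs of vertices) are vertex-disjoint. -/
def Sym2Disj {V : Type*} (e f : Sym2 V) : Prop := ∀ v, ¬ (v ∈ e ∧ v ∈ f)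

/-- A finite set of edges is a matching: edges are non-loops and pairwise vertex-disjoint. -/
def Sym2IsMatching {V : Type*} (M : Finset (Sym2 V)) : Prop :=
  (∀ e ∈ M, ¬ e.IsDiag) ∧ ∀ e ∈ M, ∀ f ∈ M, e ≠ f → Sym2Disj e f

open Finset
lemma cover_sum {V : Type*} [Fintype V] [DecidableEq V] {A : Type*} [AddCommMonoid A]
    (f : V → A) (m : ℕ) (hm : Fintype.card V = 2 * m)
    (a b : Fin m → V) (hab : ∀ i, a i ≠ b i)
    (hdisj : ∀ i j : Fin m, i ≠ j → Disjoint ({a i, b i} : Finset V) {a j, b j}) :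
    ∑ i, (f (a i) + f (b i)) = ∑ v, f v := by
  have hpd : ∀ i ∈ (univ : Finset (Fin m)), ∀ j ∈ univ, i ≠ j →
      Disjoint ({a i, b i} : Finset V) {a j, b j} := fun i _ j _ hij => hdisj i j hij
  have hcard : (univ.biUnion fun i : Fin m => ({a i, b i} : Finset V)).card = Fintype.card V := by
    rw [Finset.card_biUnion hpd, hm]
    have : ∀ i : Fin m, ({a i, b i} : Finset V).card = 2 := fun i => Finset.card_pair (hab i)
    simp [this, mul_comm]
  have huniv : (univ.biUnion fun i : Fin m => ({a i, b i} : Finset V)) = univ :=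
    Finset.eq_univ_of_card _ hcard
  calc ∑ i, (f (a i) + f (b i)) = ∑ i, ∑ v ∈ ({a i, b i} : Finset V), f v := by
        refine Finset.sum_congr rfl fun i _ => ?_
        rw [Finset.sum_pair (hab i)]
    _ = ∑ v ∈ univ.biUnion fun i : Fin m => ({a i, b i} : Finset V), f v :=
        (Finset.sum_biUnion hpd).symm
    _ = ∑ v, f v := by rw [huniv]


theorem stmt2 (n k : ℕ) (hn : 1 < n) (hk1 : 1 ≤ k) (hk2 : k ≤ n - 1)
    -- M1: the 'odd' perfect matching of C_{2n}, M2: the 'even' one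
    (M1 M2 : Finset (Sym2 (ZMod (2 * n))))
    (hM1 : M1 = (Finset.range n).image
      (fun j => s(((2 * j : ℕ) : ZMod (2 * n)), ((2 * j + 1 : ℕ) : ZMod (2 * n)))))
    (hM2 : M2 = (Finset.range n).image
      (fun j => s(((2 * j + 1 : ℕ) : ZMod (2 * n)), ((2 * j + 2 : ℕ) : ZMod (2 * n)))))
    -- the family: k copies of M1 followed by n - k copies of M2
    (F : Fin n → Finset (Sym2 (ZMod (2 * n))))
    (hF : ∀ i, F i = if (i : ℕ) < k then M1 else M2) :
    ¬ ∃ g : Fin n → Sym2 (ZMod (2 * n)),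
        (∀ i, g i ∈ F i) ∧ ∀ i j, i ≠ j → Sym2Disj (g i) (g j) := by
  rintro ⟨g, hg, hgd⟩
  haveI : NeZero (2 * n) := ⟨by omega⟩
  have hcardV : Fintype.card (ZMod (2 * n)) = 2 * n := ZMod.card _
  -- cast injectivity on small naturals
  have hinj : ∀ x y : ℕ, x < 2 * n → y < 2 * n → ((x : ZMod (2 * n)) = y) → x = y := by
    intro x y hx hy h
    have := congrArg ZMod.val h
    rwa [ZMod.val_cast_of_lt hx, ZMod.val_cast_of_lt hy] at this
  -- parity map and weight
  have h2dvd : (2 : ℕ) ∣ 2 * n := ⟨n, rfl⟩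
  set par : ZMod (2 * n) →+* ZMod 2 := ZMod.castHom h2dvd (ZMod 2) with hpar
  set c : ZMod (2 * n) → ZMod (2 * n) := fun v => if par v = 1 then v else -v with hc
  have hce : ∀ x : ℕ, c ((2 * x : ℕ) : ZMod (2 * n)) = -((2 * x : ℕ) : ZMod (2 * n)) := by
    intro x
    have : par ((2 * x : ℕ) : ZMod (2 * n)) = ((2 * x : ℕ) : ZMod 2) := map_natCast par _
    simp only [hc]
    rw [this]
    have h0 : ((2 * x : ℕ) : ZMod 2) = 0 := by
      rw [Nat.cast_mul, ZMod.natCast_self, zero_mul]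
    rw [h0]
    simp
  have hco : ∀ x : ℕ, c ((2 * x + 1 : ℕ) : ZMod (2 * n)) = ((2 * x + 1 : ℕ) : ZMod (2 * n)) := by
    intro x
    have : par ((2 * x + 1 : ℕ) : ZMod (2 * n)) = ((2 * x + 1 : ℕ) : ZMod 2) := map_natCast par _
    simp only [hc]
    rw [this]
    have h1 : ((2 * x + 1 : ℕ) : ZMod 2) = 1 := by
      rw [Nat.cast_add, Nat.cast_mul, ZMod.natCast_self, zero_mul, zero_add, Nat.cast_one]
    rw [h1]
    simp
  -- total sum of c over V, via the M1 family
  have ha'b' : ∀ j : Fin n, ((2 * (j:ℕ) : ℕ) : ZMod (2 * n)) ≠ ((2 * (j:ℕ) + 1 : ℕ) : ZMod (2 * n)) := by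
    intro j h
    have := hinj _ _ (by omega) (by omega) h
    omega
  have htot : ∑ v : ZMod (2 * n), c v = (n : ZMod (2 * n)) := by
    have hdj : ∀ i j : Fin n, i ≠ j →
        Disjoint ({((2 * (i:ℕ) : ℕ) : ZMod (2 * n)), ((2 * (i:ℕ) + 1 : ℕ) : ZMod (2 * n))} : Finset (ZMod (2 * n)))
          {((2 * (j:ℕ) : ℕ) : ZMod (2 * n)), ((2 * (j:ℕ) + 1 : ℕ) : ZMod (2 * n))} := by
      intro i j hij
      rw [Finset.disjoint_left]
      intro v hv hv'
      have hi := i.isLt; have hj := j.isLt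
      have hne : (i:ℕ) ≠ (j:ℕ) := fun h => hij (Fin.ext h)
      simp only [Finset.mem_insert, Finset.mem_singleton] at hv hv'
      rcases hv with rfl | rfl <;> rcases hv' with h | h <;>
        · have := hinj _ _ (by omega) (by omega) h
          omega
    have := cover_sum c n hcardV (fun j => ((2 * (j:ℕ) : ℕ) : ZMod (2 * n)))
      (fun j => ((2 * (j:ℕ) + 1 : ℕ) : ZMod (2 * n))) ha'b' hdj
    rw [← this]
    have h1 : ∀ j : Fin n, c ((2 * (j:ℕ) : ℕ) : ZMod (2 * n)) + c ((2 * (j:ℕ) + 1 : ℕ) : ZMod (2 * n)) = 1 := by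
      intro j
      rw [hce, hco]
      push_cast
      ring
    rw [Finset.sum_congr rfl fun j _ => h1 j]
    simp
  haveI : Fact (1 < 2 * n) := ⟨by omega⟩
  -- decompose g
  have hex : ∀ i : Fin n, ∃ j, j < n ∧ g i =
      (if (i:ℕ) < k then s(((2 * j : ℕ) : ZMod (2 * n)), ((2 * j + 1 : ℕ) : ZMod (2 * n)))
        else s(((2 * j + 1 : ℕ) : ZMod (2 * n)), ((2 * j + 2 : ℕ) : ZMod (2 * n)))) := by
    intro i
    have hgi := hg i
    rw [hF i] at hgi
    by_cases hik : (i:ℕ) < k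
    · rw [if_pos hik, hM1, Finset.mem_image] at hgi
      obtain ⟨j, hj, hje⟩ := hgi
      exact ⟨j, Finset.mem_range.mp hj, by rw [if_pos hik, ← hje]⟩
    · rw [if_neg hik, hM2, Finset.mem_image] at hgi
      obtain ⟨j, hj, hje⟩ := hgi
      exact ⟨j, Finset.mem_range.mp hj, by rw [if_neg hik, ← hje]⟩
  choose jf hjlt hgeq using hex
  set a : Fin n → ZMod (2 * n) := fun i =>
    if (i:ℕ) < k then ((2 * jf i : ℕ) : ZMod (2 * n)) else ((2 * jf i + 1 : ℕ) : ZMod (2 * n)) with hadef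
  set b : Fin n → ZMod (2 * n) := fun i =>
    if (i:ℕ) < k then ((2 * jf i + 1 : ℕ) : ZMod (2 * n)) else ((2 * jf i + 2 : ℕ) : ZMod (2 * n)) with hbdef
  have hgab : ∀ i, g i = s(a i, b i) := by
    intro i
    rw [hgeq i, hadef, hbdef]
    by_cases hik : (i:ℕ) < k <;> simp [hik]
  have hone : (1 : ZMod (2 * n)) ≠ 0 := one_ne_zero
  have hab : ∀ i, a i ≠ b i := by
    intro i h
    rw [hadef, hbdef] at h
    by_cases hik : (i:ℕ) < k <;> simp only [hik, if_pos, if_neg, if_true, if_false] at h <;>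
    · apply hone
      push_cast at h
      linear_combination -h
  have hdisjg : ∀ i j : Fin n, i ≠ j →
      Disjoint ({a i, b i} : Finset (ZMod (2 * n))) {a j, b j} := by
    intro i j hij
    rw [Finset.disjoint_left]
    intro v hv hv'
    refine hgd i j hij v ⟨?_, ?_⟩
    · rw [hgab i, Sym2.mem_iff]
      simpa using hv
    · rw [hgab j, Sym2.mem_iff]
      simpa using hv'
  have hsum := cover_sum c n hcardV a b hab hdisjg
  rw [htot] at hsum
  have hterm : ∀ i : Fin n, c (a i) + c (b i) = if (i:ℕ) < k then (1 : ZMod (2 * n)) else -1 := by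
    intro i
    rw [hadef, hbdef]
    by_cases hik : (i:ℕ) < k
    · simp only [hik, if_true]
      rw [hce, hco]
      push_cast
      ring
    · simp only [hik, if_false]
      have h2 : ((2 * jf i + 2 : ℕ) : ZMod (2 * n)) = ((2 * (jf i + 1) : ℕ) : ZMod (2 * n)) := by push_cast; ring
      rw [hco, h2, hce]
      push_cast
      ring
  rw [Finset.sum_congr rfl fun i _ => hterm i] at hsum
  -- evaluate the ± sum
  have hkn : k ≤ n := by omega
  have hcard1 : (univ.filter fun i : Fin n => (i:ℕ) < k).card = k := by
    have hmem : ∀ m ∈ Finset.range k, m < n := fun m hm => by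
      have := Finset.mem_range.mp hm; omega
    have : (univ.filter fun i : Fin n => (i:ℕ) < k) = (Finset.range k).attachFin hmem := by
      ext i
      simp [Finset.mem_attachFin]
    rw [this, Finset.card_attachFin, Finset.card_range]
  have hcard2 : (univ.filter fun i : Fin n => ¬ (i:ℕ) < k).card = n - k := by
    have := Finset.card_filter_add_card_filter_not (s := (univ : Finset (Fin n)))
      (p := fun i : Fin n => (i:ℕ) < k)
    rw [hcard1] at this
    simp only [Finset.card_univ, Fintype.card_fin] at this
    omega
  rw [Finset.sum_ite] at hsum
  rw [Finset.sum_const, Finset.sum_const, hcard1, hcard2] at hsum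
  have hsum2 : (k : ZMod (2 * n)) - ((n - k : ℕ) : ZMod (2 * n)) = (n : ZMod (2 * n)) := by
    rw [← hsum]
    simp [nsmul_eq_mul]
    ring
  rw [Nat.cast_sub hkn] at hsum2
  have hfin : ((2 * k : ℕ) : ZMod (2 * n)) = ((2 * n : ℕ) : ZMod (2 * n)) := by
    push_cast
    linear_combination hsum2
  rw [ZMod.natCast_self] at hfin
  have hdvd := (ZMod.natCast_eq_zero_iff _ _).mp hfin
  have := Nat.le_of_dvd (by omega) hdvd
  omega
end

section
/- If F₁,…,Fₙ are matchings in a bipartite graph, each of size at least ⌊3n/2⌋, then there is a rainbow matching of size n−1, i.e., pairwise disjoint edges chosen from n−1 distinct Fᵢ's. -/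
lemma edgeDisj_symm {α β : Type*} {e f : α × β} (h : EdgeDisj e f) : EdgeDisj f e :=
  ⟨Ne.symm h.1, Ne.symm h.2⟩

lemma rainbow_step {α β : Type*} {n : ℕ} (F : Fin n → Finset (α × β))
    (hmatch : ∀ i, IsMatching (F i)) (hcard : ∀ i, 3 * n / 2 ≤ (F i).card)
    {t : ℕ} (htn : t + 2 ≤ n)
    (S : Finset (Fin n)) (g : Fin n → α × β) (hS : S.card = t)
    (hmem : ∀ i ∈ S, g i ∈ F i)
    (hdisj : ∀ i ∈ S, ∀ j ∈ S, i ≠ j → EdgeDisj (g i) (g j)) :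
    ∃ (S' : Finset (Fin n)) (g' : Fin n → α × β), S'.card = t + 1 ∧
      (∀ i ∈ S', g' i ∈ F i) ∧ ∀ i ∈ S', ∀ j ∈ S', i ≠ j → EdgeDisj (g' i) (g' j) := by
  classical
  set A : Finset α := S.image (fun c => (g c).1) with hA
  set B : Finset β := S.image (fun c => (g c).2) with hB
  have hAcard : A.card = t := by
    rw [hA, Finset.card_image_of_injOn, hS]
    intro c hc c' hc' hcc
    by_contra hne
    exact (hdisj c hc c' hc' hne).1 hcc
  have hBcard : B.card = t := by
    rw [hB, Finset.card_image_of_injOn, hS]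
    intro c hc c' hc' hcc
    by_contra hne
    exact (hdisj c hc c' hc' hne).2 hcc
  -- extension helper
  have hext : ∀ k ∉ S, ∀ e ∈ F k, e.1 ∉ A → e.2 ∉ B →
      ∃ (S' : Finset (Fin n)) (g' : Fin n → α × β), S'.card = t + 1 ∧
      (∀ i ∈ S', g' i ∈ F i) ∧ ∀ i ∈ S', ∀ j ∈ S', i ≠ j → EdgeDisj (g' i) (g' j) := by
    intro k hk e he h1 h2
    set g' : Fin n → α × β := Function.update g k e with hg'
    have hval : ∀ d ∈ insert k S, (d = k ∧ g' d = e) ∨ (d ∈ S ∧ g' d = g d) := by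
      intro d hd
      rcases Finset.mem_insert.mp hd with h | hdS
      · exact Or.inl ⟨h, by rw [hg', h, Function.update_self]⟩
      · have hdk : d ≠ k := fun hh => hk (hh ▸ hdS)
        exact Or.inr ⟨hdS, by rw [hg', Function.update_of_ne hdk]⟩
    have key : ∀ d ∈ S, EdgeDisj e (g d) := by
      intro d hd
      constructor
      · intro hcon; exact h1 (Finset.mem_image.mpr ⟨d, hd, hcon.symm⟩)
      · intro hcon; exact h2 (Finset.mem_image.mpr ⟨d, hd, hcon.symm⟩)
    refine ⟨insert k S, g', ?_, ?_, ?_⟩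
    · rw [Finset.card_insert_of_notMem hk, hS]
    · intro d hd
      rcases hval d hd with ⟨hdk, h⟩ | ⟨hdS, h⟩
      · rw [h, hdk]; exact he
      · rw [h]; exact hmem d hdS
    · intro d hd d' hd' hne
      rcases hval d hd with ⟨hdk, h⟩ | ⟨hdS, h⟩ <;>
        rcases hval d' hd' with ⟨hdk', h'⟩ | ⟨hdS', h'⟩
      · exact absurd (hdk.trans hdk'.symm) hne
      · rw [h, h']; exact key d' hdS'
      · rw [h, h']; exact edgeDisj_symm (key d hdS)
      · rw [h, h']; exact hdisj d hdS d' hdS' hne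
  -- swap helper
  have hswap : ∀ k1, k1 ∉ S → ∀ k2, k2 ∉ S → k1 ≠ k2 → ∀ c ∈ S,
      ∀ e1 ∈ F k1, ∀ e2 ∈ F k2, e1.1 = (g c).1 → e1.2 ∉ B → e2.2 = (g c).2 → e2.1 ∉ A →
      ∃ (S' : Finset (Fin n)) (g' : Fin n → α × β), S'.card = t + 1 ∧
      (∀ i ∈ S', g' i ∈ F i) ∧ ∀ i ∈ S', ∀ j ∈ S', i ≠ j → EdgeDisj (g' i) (g' j) := by
    intro k1 hk1 k2 hk2 hk12 c hc e1 he1 e2 he2 h11 h12 h22 h21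
    have htpos : 1 ≤ t := hS ▸ Finset.card_pos.mpr ⟨c, hc⟩
    set g' : Fin n → α × β := Function.update (Function.update g k2 e2) k1 e1 with hg'
    set S' : Finset (Fin n) := insert k1 (insert k2 (S.erase c)) with hS'
    have hk2e : k2 ∉ S.erase c := fun h => hk2 (Finset.mem_of_mem_erase h)
    have hk1e : k1 ∉ insert k2 (S.erase c) := by
      intro h
      rcases Finset.mem_insert.mp h with h | h
      · exact hk12 h
      · exact hk1 (Finset.mem_of_mem_erase h)
    have hval : ∀ d ∈ S',
        (d = k1 ∧ g' d = e1) ∨ (d = k2 ∧ g' d = e2) ∨ (d ∈ S.erase c ∧ g' d = g d) := by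
      intro d hd
      rcases Finset.mem_insert.mp hd with rfl | hd
      · exact Or.inl ⟨rfl, by rw [hg', Function.update_self]⟩
      · rcases Finset.mem_insert.mp hd with rfl | hd
        · refine Or.inr (Or.inl ⟨rfl, ?_⟩)
          rw [hg', Function.update_of_ne (Ne.symm hk12), Function.update_self]
        · refine Or.inr (Or.inr ⟨hd, ?_⟩)
          have hd1 : d ≠ k1 := fun h => hk1 (h ▸ Finset.mem_of_mem_erase hd)
          have hd2 : d ≠ k2 := fun h => hk2 (h ▸ Finset.mem_of_mem_erase hd)
          rw [hg', Function.update_of_ne hd1, Function.update_of_ne hd2]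
    have key12 : EdgeDisj e1 e2 := by
      constructor
      · rw [h11]; intro hcon; exact h21 (Finset.mem_image.mpr ⟨c, hc, hcon⟩)
      · rw [h22]; intro hcon; exact h12 (Finset.mem_image.mpr ⟨c, hc, hcon.symm⟩)
    have key1d : ∀ d ∈ S.erase c, EdgeDisj e1 (g d) := by
      intro d hd
      obtain ⟨hdc, hdS⟩ := Finset.mem_erase.mp hd
      constructor
      · rw [h11]; exact (hdisj c hc d hdS (Ne.symm hdc)).1
      · intro hcon; exact h12 (Finset.mem_image.mpr ⟨d, hdS, hcon.symm⟩)
    have key2d : ∀ d ∈ S.erase c, EdgeDisj e2 (g d) := by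
      intro d hd
      obtain ⟨hdc, hdS⟩ := Finset.mem_erase.mp hd
      constructor
      · intro hcon; exact h21 (Finset.mem_image.mpr ⟨d, hdS, hcon.symm⟩)
      · rw [h22]; exact (hdisj c hc d hdS (Ne.symm hdc)).2
    refine ⟨S', g', ?_, ?_, ?_⟩
    · rw [hS', Finset.card_insert_of_notMem hk1e, Finset.card_insert_of_notMem hk2e,
        Finset.card_erase_of_mem hc, hS]
      omega
    · intro d hd
      rcases hval d hd with ⟨rfl, h⟩ | ⟨rfl, h⟩ | ⟨hd', h⟩
      · rw [h]; exact he1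
      · rw [h]; exact he2
      · rw [h]; exact hmem d (Finset.mem_of_mem_erase hd')
    · intro d hd d' hd' hne
      rcases hval d hd with ⟨hdk, h⟩ | ⟨hdk, h⟩ | ⟨hdm, h⟩ <;>
        rcases hval d' hd' with ⟨hdk', h'⟩ | ⟨hdk', h'⟩ | ⟨hdm', h'⟩
      · exact absurd (hdk.trans hdk'.symm) hne
      · rw [h, h']; exact key12
      · rw [h, h']; exact key1d d' hdm'
      · rw [h, h']; exact edgeDisj_symm key12
      · exact absurd (hdk.trans hdk'.symm) hne
      · rw [h, h']; exact key2d d' hdm'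
      · rw [h, h']; exact edgeDisj_symm (key1d d hdm)
      · rw [h, h']; exact edgeDisj_symm (key2d d hdm)
      · rw [h, h']
        exact hdisj d (Finset.mem_of_mem_erase hdm) d' (Finset.mem_of_mem_erase hdm') hne
  -- pick two unused colors
  have hcompl : 1 < Sᶜ.card := by
    rw [Finset.card_compl, hS, Fintype.card_fin]
    omega
  obtain ⟨i, hiC, j, hjC, hij⟩ := Finset.one_lt_card.mp hcompl
  have hiS : i ∉ S := Finset.mem_compl.mp hiC
  have hjS : j ∉ S := Finset.mem_compl.mp hjC
  by_cases hfi : ∃ e ∈ F i, e.1 ∉ A ∧ e.2 ∉ B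
  · obtain ⟨e, he, h1, h2⟩ := hfi
    exact hext i hiS e he h1 h2
  by_cases hfj : ∃ e ∈ F j, e.1 ∉ A ∧ e.2 ∉ B
  · obtain ⟨e, he, h1, h2⟩ := hfj
    exact hext j hjS e he h1 h2
  push_neg at hfi hfj
  have hi : ∀ e ∈ F i, e.1 ∈ A ∨ e.2 ∈ B := by
    intro e he
    by_cases h : e.1 ∈ A
    · exact Or.inl h
    · exact Or.inr (hfi e he h)
  have hj : ∀ e ∈ F j, e.1 ∈ A ∨ e.2 ∈ B := by
    intro e he
    by_cases h : e.1 ∈ A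
    · exact Or.inl h
    · exact Or.inr (hfj e he h)
  -- index maps
  set f1 : α × β → Fin n := fun e => if h : ∃ c ∈ S, (g c).1 = e.1 then h.choose else i with hf1def
  set f2 : α × β → Fin n := fun e => if h : ∃ c ∈ S, (g c).2 = e.2 then h.choose else i with hf2def
  have hf1 : ∀ e : α × β, e.1 ∈ A → f1 e ∈ S ∧ (g (f1 e)).1 = e.1 := by
    intro e he
    have hex : ∃ c ∈ S, (g c).1 = e.1 := Finset.mem_image.mp he
    rw [hf1def]
    simp only [dif_pos hex]
    exact hex.choose_spec
  have hf2 : ∀ e : α × β, e.2 ∈ B → f2 e ∈ S ∧ (g (f2 e)).2 = e.2 := by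
    intro e he
    have hex : ∃ c ∈ S, (g c).2 = e.2 := Finset.mem_image.mp he
    rw [hf2def]
    simp only [dif_pos hex]
    exact hex.choose_spec
  set Sa : Fin n → Finset (α × β) := fun k => (F k).filter (fun e => e.1 ∈ A ∧ e.2 ∉ B) with hSa
  set Sb : Fin n → Finset (α × β) := fun k => (F k).filter (fun e => e.1 ∉ A ∧ e.2 ∈ B) with hSb
  set Xa : Fin n → Finset (Fin n) := fun k => (Sa k).image f1 with hXa
  set Xb : Fin n → Finset (Fin n) := fun k => (Sb k).image f2 with hXb
  have hXacard : ∀ k, (Xa k).card = (Sa k).card := by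
    intro k
    rw [hXa]
    apply Finset.card_image_of_injOn
    intro e he e' he' hee
    obtain ⟨heF, heA, -⟩ := Finset.mem_filter.mp he
    obtain ⟨heF', heA', -⟩ := Finset.mem_filter.mp he'
    have h1 : (g (f1 e)).1 = e.1 := (hf1 e heA).2
    have h2 : (g (f1 e')).1 = e'.1 := (hf1 e' heA').2
    have : e.1 = e'.1 := by rw [← h1, ← h2, hee]
    by_contra hne
    exact (hmatch k e heF e' heF' hne).1 this
  have hXbcard : ∀ k, (Xb k).card = (Sb k).card := by
    intro k
    rw [hXb]
    apply Finset.card_image_of_injOn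
    intro e he e' he' hee
    obtain ⟨heF, -, heB⟩ := Finset.mem_filter.mp he
    obtain ⟨heF', -, heB'⟩ := Finset.mem_filter.mp he'
    have h1 : (g (f2 e)).2 = e.2 := (hf2 e heB).2
    have h2 : (g (f2 e')).2 = e'.2 := (hf2 e' heB').2
    have : e.2 = e'.2 := by rw [← h1, ← h2, hee]
    by_contra hne
    exact (hmatch k e heF e' heF' hne).2 this
  have hXaS : ∀ k, Xa k ⊆ S := by
    intro k c hcmem
    obtain ⟨e, he, hec⟩ := Finset.mem_image.mp hcmem
    obtain ⟨-, heA, -⟩ := Finset.mem_filter.mp he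
    exact hec ▸ (hf1 e heA).1
  have hXbS : ∀ k, Xb k ⊆ S := by
    intro k c hcmem
    obtain ⟨e, he, hec⟩ := Finset.mem_image.mp hcmem
    obtain ⟨-, -, heB⟩ := Finset.mem_filter.mp he
    exact hec ▸ (hf2 e heB).1
  -- counting lower bounds
  have hlow : ∀ k, (∀ e ∈ F k, e.1 ∈ A ∨ e.2 ∈ B) →
      3 * n / 2 ≤ t + (Sa k).card ∧ 3 * n / 2 ≤ t + (Sb k).card := by
    intro k hk
    have hP : ((F k).filter (fun e => e.1 ∈ A)).card ≤ t := by
      rw [← hAcard]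
      apply Finset.card_le_card_of_injOn (fun e => e.1)
      · intro e he
        exact (Finset.mem_filter.mp he).2
      · intro e he e' he' hee
        by_contra hne
        exact (hmatch k e (Finset.mem_filter.mp he).1 e' (Finset.mem_filter.mp he').1 hne).1 hee
    have hQ : ((F k).filter (fun e => e.2 ∈ B)).card ≤ t := by
      rw [← hBcard]
      apply Finset.card_le_card_of_injOn (fun e => e.2)
      · intro e he
        exact (Finset.mem_filter.mp he).2
      · intro e he e' he' hee
        by_contra hne
        exact (hmatch k e (Finset.mem_filter.mp he).1 e' (Finset.mem_filter.mp he').1 hne).2 hee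
    constructor
    · have hsub : F k ⊆ ((F k).filter (fun e => e.2 ∈ B)) ∪ Sa k := by
        intro e he
        by_cases h : e.2 ∈ B
        · exact Finset.mem_union_left _ (Finset.mem_filter.mpr ⟨he, h⟩)
        · refine Finset.mem_union_right _ (Finset.mem_filter.mpr ⟨he, ?_, h⟩)
          rcases hk e he with h' | h'
          · exact h'
          · exact absurd h' h
      calc 3 * n / 2 ≤ (F k).card := hcard k
        _ ≤ (((F k).filter (fun e => e.2 ∈ B)) ∪ Sa k).card := Finset.card_le_card hsub
        _ ≤ ((F k).filter (fun e => e.2 ∈ B)).card + (Sa k).card := Finset.card_union_le _ _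
        _ ≤ t + (Sa k).card := by omega
    · have hsub : F k ⊆ ((F k).filter (fun e => e.1 ∈ A)) ∪ Sb k := by
        intro e he
        by_cases h : e.1 ∈ A
        · exact Finset.mem_union_left _ (Finset.mem_filter.mpr ⟨he, h⟩)
        · refine Finset.mem_union_right _ (Finset.mem_filter.mpr ⟨he, h, ?_⟩)
          rcases hk e he with h' | h'
          · exact absurd h' h
          · exact h'
      calc 3 * n / 2 ≤ (F k).card := hcard k
        _ ≤ (((F k).filter (fun e => e.1 ∈ A)) ∪ Sb k).card := Finset.card_le_card hsub
        _ ≤ ((F k).filter (fun e => e.1 ∈ A)).card + (Sb k).card := Finset.card_union_le _ _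
        _ ≤ t + (Sb k).card := by omega
  by_cases h1 : (Xa i ∩ Xb j).Nonempty
  · obtain ⟨c, hcmem⟩ := h1
    obtain ⟨hc1, hc2⟩ := Finset.mem_inter.mp hcmem
    obtain ⟨e1, he1, he1c⟩ := Finset.mem_image.mp hc1
    obtain ⟨e2, he2, he2c⟩ := Finset.mem_image.mp hc2
    obtain ⟨he1F, he1A, he1B⟩ := Finset.mem_filter.mp he1
    obtain ⟨he2F, he2A, he2B⟩ := Finset.mem_filter.mp he2
    have hcS : c ∈ S := hXaS i hc1
    have hg1 : e1.1 = (g c).1 := by rw [← he1c]; exact ((hf1 e1 he1A).2).symm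
    have hg2 : e2.2 = (g c).2 := by rw [← he2c]; exact ((hf2 e2 he2B).2).symm
    exact hswap i hiS j hjS hij c hcS e1 he1F e2 he2F hg1 he1B hg2 he2A
  by_cases h2 : (Xa j ∩ Xb i).Nonempty
  · obtain ⟨c, hcmem⟩ := h2
    obtain ⟨hc1, hc2⟩ := Finset.mem_inter.mp hcmem
    obtain ⟨e1, he1, he1c⟩ := Finset.mem_image.mp hc1
    obtain ⟨e2, he2, he2c⟩ := Finset.mem_image.mp hc2
    obtain ⟨he1F, he1A, he1B⟩ := Finset.mem_filter.mp he1
    obtain ⟨he2F, he2A, he2B⟩ := Finset.mem_filter.mp he2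
    have hcS : c ∈ S := hXaS j hc1
    have hg1 : e1.1 = (g c).1 := by rw [← he1c]; exact ((hf1 e1 he1A).2).symm
    have hg2 : e2.2 = (g c).2 := by rw [← he2c]; exact ((hf2 e2 he2B).2).symm
    exact hswap j hjS i hiS (Ne.symm hij) c hcS e1 he1F e2 he2F hg1 he1B hg2 he2A
  -- contradiction
  exfalso
  have hd1 : (Xa i).card + (Xb j).card ≤ t := by
    have hdisj' : Disjoint (Xa i) (Xb j) :=
      Finset.disjoint_iff_inter_eq_empty.mpr (Finset.not_nonempty_iff_eq_empty.mp h1)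
    have hsub : Xa i ∪ Xb j ⊆ S := Finset.union_subset (hXaS i) (hXbS j)
    calc (Xa i).card + (Xb j).card = (Xa i ∪ Xb j).card :=
          (Finset.card_union_of_disjoint hdisj').symm
      _ ≤ S.card := Finset.card_le_card hsub
      _ = t := hS
  have hd2 : (Xa j).card + (Xb i).card ≤ t := by
    have hdisj' : Disjoint (Xa j) (Xb i) :=
      Finset.disjoint_iff_inter_eq_empty.mpr (Finset.not_nonempty_iff_eq_empty.mp h2)
    have hsub : Xa j ∪ Xb i ⊆ S := Finset.union_subset (hXaS j) (hXbS i)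
    calc (Xa j).card + (Xb i).card = (Xa j ∪ Xb i).card :=
          (Finset.card_union_of_disjoint hdisj').symm
      _ ≤ S.card := Finset.card_le_card hsub
      _ = t := hS
  obtain ⟨hli1, hli2⟩ := hlow i hi
  obtain ⟨hlj1, hlj2⟩ := hlow j hj
  have e1 := hXacard i
  have e2 := hXbcard i
  have e3 := hXacard j
  have e4 := hXbcard j
  omega

theorem stmt3 {α β : Type*} (n : ℕ) (F : Fin n → Finset (α × β))
    (hmatch : ∀ i, IsMatching (F i)) (hcard : ∀ i, 3 * n / 2 ≤ (F i).card) :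
    ∃ (S : Finset (Fin n)) (g : Fin n → α × β), S.card = n - 1 ∧
      (∀ i ∈ S, g i ∈ F i) ∧ ∀ i ∈ S, ∀ j ∈ S, i ≠ j → EdgeDisj (g i) (g j) := by
  classical
  rcases Nat.eq_zero_or_pos n with rfl | hn
  · exact ⟨∅, Fin.elim0, by simp, by simp, by simp⟩
  have h0 : (0 : ℕ) < n := hn
  have hne : (F ⟨0, h0⟩).Nonempty := by
    rw [← Finset.card_pos]
    have := hcard ⟨0, h0⟩
    omega
  obtain ⟨e0, -⟩ := hne
  have key : ∀ t, t ≤ n - 1 → ∃ (S : Finset (Fin n)) (g : Fin n → α × β), S.card = t ∧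
      (∀ i ∈ S, g i ∈ F i) ∧ ∀ i ∈ S, ∀ j ∈ S, i ≠ j → EdgeDisj (g i) (g j) := by
    intro t
    induction t with
    | zero => intro _; exact ⟨∅, fun _ => e0, by simp, by simp, by simp⟩
    | succ t ih =>
      intro ht
      obtain ⟨S, g, hS, hm, hd⟩ := ih (by omega)
      exact rainbow_step F hmatch hcard (by omega) S g hS hm hd
  exact key (n - 1) le_rfl
end
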